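/- arXiv:1305.0453 — 6 statements merged into one kernel-verified Lean document; each statement's English description precedes it below -/
import Mathlib

section
/- Error bound for the rounded forward Euler method (positive part of the FPSPACE-completeness theorem for LipIVP): Assume p ≥ n + 8L + M. Let a : ℕ → ℝ and h̃ : ℝ → ℝ satisfy h̃(0) = 0 and, for every natural number T < 2^p: |a(T) − g(T/2^p, h̃(T/2^p))| ≤ 2^(−(n+8L)), and h̃(T/2^p + Δ) = h̃(T/2^p) + Δ·a(T) for every Δ ∈ [0, 2^(−p)] (so h̃ is the Euler polygon with step size 2^(−p) whose slopes are computed with error at most 2^(−(n+8L))). Then for every t ∈ [0,1] one has |h̃(t) − h(t)| ≤ 2^(−n)·exp(4L(t − 1)); in particular |h̃(t) − h(t)| ≤ 2^(−n) for all t ∈ [0,1]. -/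
/-!
On a step `[s, s + 2^(-p)]` of the polygon the error `e = h̃ - h` has derivative
`a T - g x (h x)`. Comparing with `g s (h̃ s)` through the slope error, the time modulus of `g`,
its Lipschitz constant and the bound `2^M` on `h'` shows that this derivative is at most
`L |e s| + c` with `c = 2ε + L 2^M 2^(-p) ≤ 3Lε`, where `ε = 2^(-(n+8L))`. The resulting
one-step inequality `|e t| ≤ |e s| + (L |e s| + c)(t - s)` preserves the Grönwall bound
`G t = (c / L)(exp (L t) - 1)`, because `G` is convex with `G' = L G + c`. Finally
`3 exp (4L) ≤ 2^(8L)` turns `3ε exp (L t)` into `2^(-n) exp (4L(t - 1))`.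
-/
open Real Set

theorem gronwallBound_add_mul_le {δ K ε : ℝ} (hδ : 0 ≤ δ) (hK : 0 ≤ K) (hε : 0 ≤ ε) (x d : ℝ) :
    gronwallBound δ K ε x + (K * gronwallBound δ K ε x + ε) * d ≤
      gronwallBound δ K ε (x + d) := by
  rcases hK.eq_or_lt with rfl | hK
  · simp only [gronwallBound_K0]
    linarith
  · simp only [gronwallBound_of_K_ne_0 hK.ne']
    have htangent := mul_le_mul_of_nonneg_left (add_one_le_exp (K * d))
      (by positivity : 0 ≤ (δ + ε / K) * exp (K * x))
    have hKε : K * (ε / K) = ε := mul_div_cancel₀ ε hK.ne'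
    rw [mul_add K x d, exp_add]
    linear_combination htangent - d * hKε

theorem gronwallBound_zero_le {K ε : ℝ} (hK : 0 < K) (hε : 0 ≤ ε) (x : ℝ) :
    gronwallBound 0 K ε x ≤ ε / K * exp (K * x) := by
  simp only [gronwallBound_of_K_ne_0 hK.ne', zero_mul, zero_add]
  have : 0 ≤ ε / K := by positivity
  nlinarith

theorem exists_lt_mem_Icc_div {N : ℕ} (hN : 0 < N) {t : ℝ} (ht : t ∈ Icc (0:ℝ) 1) :
    ∃ T < N, t ∈ Icc ((T : ℝ) / N) ((T + 1) / N) := by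
  have hN' : (0:ℝ) < N := by exact_mod_cast hN
  rcases ht.2.lt_or_eq with ht1 | rfl
  · refine ⟨⌊t * N⌋₊, (Nat.floor_lt (mul_nonneg ht.1 hN'.le)).2 (by nlinarith [ht.1]), ?_, ?_⟩
    · rw [div_le_iff₀ hN']
      exact Nat.floor_le (mul_nonneg ht.1 hN'.le)
    · rw [le_div_iff₀ hN']
      exact (Nat.lt_floor_add_one _).le
  · refine ⟨N - 1, by omega, ?_, ?_⟩
    · rw [div_le_one hN']
      exact_mod_cast Nat.sub_le N 1
    · rw [Nat.cast_sub (by omega), Nat.cast_one, sub_add_cancel, div_self hN'.ne']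

theorem forall_mem_Icc_le_of_grid_step {E Φ : ℝ → ℝ} {N : ℕ} (hN : 0 < N) (h0 : E 0 ≤ Φ 0)
    (hstep : ∀ T < N, E (T / N) ≤ Φ (T / N) →
      ∀ t ∈ Icc ((T : ℝ) / N) ((T + 1) / N), E t ≤ Φ t) :
    ∀ t ∈ Icc (0:ℝ) 1, E t ≤ Φ t := by
  have hgrid : ∀ T ≤ N, E (T / N) ≤ Φ (T / N) := by
    intro T
    induction T with
    | zero => simpa using h0
    | succ T ih =>
      intro hT
      have hT' : T < N := hT
      have hpos : (0:ℝ) ≤ 1 / N := by positivity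
      push_cast
      exact hstep T hT' (ih hT'.le) _ ⟨by gcongr; linarith, le_rfl⟩
  intro t ht
  obtain ⟨T, hT, htT⟩ := exists_lt_mem_Icc_div hN ht
  exact hstep T hT (hgrid T hT.le) t htT

theorem abs_sub_le_of_euler_step {g : ℝ → ℝ → ℝ} {f h : ℝ → ℝ} {L ε η α s t : ℝ}
    (hL : 0 ≤ L) (hst : s ≤ t)
    (hg_lip : ∀ x ∈ Icc s t, ∀ y₀ y₁ : ℝ, |g x y₀ - g x y₁| ≤ L * |y₀ - y₁|)
    (hg_mod : ∀ x ∈ Icc s t, ∀ y : ℝ, |g s y - g x y| ≤ ε)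
    (hh : ∀ x ∈ Icc s t, HasDerivAt h (g x (h x)) x)
    (hh_osc : ∀ x ∈ Icc s t, |h s - h x| ≤ η)
    (hf : ∀ x ∈ Icc s t, f x = f s + (x - s) * α)
    (hα : |α - g s (f s)| ≤ ε) :
    |f t - h t| ≤ |f s - h s| + (L * |f s - h s| + 2 * ε + L * η) * (t - s) := by
  have hs : s ∈ Icc s t := left_mem_Icc.2 hst
  have hslope : ∀ x ∈ Icc s t, |α - g x (h x)| ≤ L * |f s - h s| + 2 * ε + L * η := by
    intro x hx
    calc |α - g x (h x)|
        ≤ |α - g s (f s)| + |g s (f s) - g s (h s)| + |g s (h s) - g x (h s)|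
            + |g x (h s) - g x (h x)| := by
          linarith [abs_sub_le α (g s (f s)) (g x (h x)),
            abs_sub_le (g s (f s)) (g s (h s)) (g x (h x)),
            abs_sub_le (g s (h s)) (g x (h s)) (g x (h x))]
      _ ≤ ε + L * |f s - h s| + ε + L * η := by
          gcongr
          exacts [hg_lip s hs _ _, hg_mod x hx _,
            (hg_lip x hx _ _).trans (by gcongr; exact hh_osc x hx)]
      _ = L * |f s - h s| + 2 * ε + L * η := by ring
  have hderiv : ∀ x ∈ Icc s t,
      HasDerivWithinAt (fun y => f y - h y) (α - g x (h x)) (Icc s t) x := by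
    intro x hx
    have haffine : HasDerivAt (fun y => f s + (y - s) * α) α x := by
      simpa using ((hasDerivAt_id x).sub_const s).mul_const α |>.const_add (f s)
    exact (haffine.hasDerivWithinAt.congr hf (hf x hx)).sub (hh x hx).hasDerivWithinAt
  have hmvt := norm_image_sub_le_of_norm_deriv_le_segment' hderiv
    (fun x hx => hslope x (Ico_subset_Icc_self hx)) t (right_mem_Icc.2 hst)
  rw [Real.norm_eq_abs] at hmvt
  linarith [abs_sub_abs_le_abs_sub (f t - h t) (f s - h s)]

theorem abs_euler_polygon_sub_le_gronwallBound {g : ℝ → ℝ → ℝ} {f h : ℝ → ℝ} {a : ℕ → ℝ}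
    {L C ε : ℝ} {N : ℕ} (hN : 0 < N) (hL : 0 ≤ L)
    (hg_lip : ∀ t ∈ Icc (0:ℝ) 1, ∀ y₀ y₁ : ℝ, |g t y₀ - g t y₁| ≤ L * |y₀ - y₁|)
    (hg_bd : ∀ t ∈ Icc (0:ℝ) 1, ∀ y : ℝ, |g t y| ≤ C)
    (hg_mod : ∀ t ∈ Icc (0:ℝ) 1, ∀ t' ∈ Icc (0:ℝ) 1, |t - t'| ≤ (N:ℝ)⁻¹ →
      ∀ y : ℝ, |g t y - g t' y| ≤ ε)
    (hh : ∀ t ∈ Icc (0:ℝ) 1, HasDerivAt h (g t (h t)) t)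
    (hf0 : f 0 = h 0)
    (ha : ∀ T < N, |a T - g (T / N) (f (T / N))| ≤ ε)
    (hf : ∀ T < N, ∀ Δ ∈ Icc (0:ℝ) (N:ℝ)⁻¹, f (T / N + Δ) = f (T / N) + Δ * a T) :
    ∀ t ∈ Icc (0:ℝ) 1, |f t - h t| ≤ gronwallBound 0 L (2 * ε + L * C / N) t := by
  have hN' : (0:ℝ) < N := by exact_mod_cast hN
  have hC : 0 ≤ C := (abs_nonneg _).trans (hg_bd 0 (left_mem_Icc.2 zero_le_one) 0)
  have hε : 0 ≤ ε := (abs_nonneg _).trans (hg_mod 0 (left_mem_Icc.2 zero_le_one) 0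
    (left_mem_Icc.2 zero_le_one) (by simp [hN'.le]) 0)
  have hh_lip : ∀ x ∈ Icc (0:ℝ) 1, ∀ y ∈ Icc (0:ℝ) 1, |h x - h y| ≤ C * |x - y| := by
    intro x hx y hy
    simpa using (convex_Icc (0:ℝ) 1).norm_image_sub_le_of_norm_hasDerivWithin_le
      (fun z hz => (hh z hz).hasDerivWithinAt) (fun z hz => hg_bd z hz (h z)) hy hx
  set c := 2 * ε + L * C / N
  refine forall_mem_Icc_le_of_grid_step hN (by simp [hf0, gronwallBound_x0]) ?_
  intro T hT ih t ht
  set s : ℝ := T / N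
  have hs : s ∈ Icc (0:ℝ) 1 := ⟨by positivity, by rw [div_le_one hN']; exact_mod_cast hT.le⟩
  have hend : ((T:ℝ) + 1) / N = s + (N:ℝ)⁻¹ := by rw [add_div, one_div]
  have hend_le : ((T:ℝ) + 1) / N ≤ 1 := by rw [div_le_one hN']; exact_mod_cast hT
  have hsub : Icc s t ⊆ Icc (0:ℝ) 1 := Icc_subset_Icc hs.1 (ht.2.trans hend_le)
  have hxs : ∀ x ∈ Icc s t, |s - x| ≤ (N:ℝ)⁻¹ := fun x hx => by
    rw [abs_sub_comm, abs_of_nonneg (by linarith [hx.1])]; linarith [hx.2, ht.2]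
  have hstep := abs_sub_le_of_euler_step (f := f) (α := a T) hL ht.1
    (fun x hx => hg_lip x (hsub hx)) (fun x hx => hg_mod s hs x (hsub hx) (hxs x hx))
    (fun x hx => hh x (hsub hx))
    (fun x hx => (hh_lip s hs x (hsub hx)).trans (mul_le_mul_of_nonneg_left (hxs x hx) hC))
    (fun x hx => by
      simpa [s] using hf T hT (x - s) ⟨by linarith [hx.1], by linarith [hx.2, ht.2]⟩)
    (ha T hT)
  calc |f t - h t|
      ≤ |f s - h s| + (L * |f s - h s| + c) * (t - s) := by
        convert hstep using 3; ring
    _ ≤ gronwallBound 0 L c s + (L * gronwallBound 0 L c s + c) * (t - s) := by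
        gcongr; linarith [ht.1]
    _ ≤ gronwallBound 0 L c t := by
        simpa using gronwallBound_add_mul_le le_rfl hL (by positivity : 0 ≤ c) s (t - s)

theorem three_mul_exp_le_two_pow {L : ℕ} (hL : 1 ≤ L) : 3 * exp (4 * L) ≤ 2 ^ (8 * L) := by
  have he : exp 1 < 2.7182818286 := exp_one_lt_d9
  have h3e4 : 3 * exp 4 ≤ 256 := by
    have : exp 4 = exp 1 ^ 4 := by rw [← exp_nat_mul]; norm_num
    rw [this]
    nlinarith [exp_pos 1, pow_le_pow_left₀ (exp_pos 1).le he.le 4]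
  calc 3 * exp (4 * L) ≤ 3 ^ L * exp 4 ^ L := by
        rw [← exp_nat_mul, mul_comm (L:ℝ)]
        gcongr
        simpa using pow_le_pow_right₀ (by norm_num : (1:ℝ) ≤ 3) hL
    _ = (3 * exp 4) ^ L := (mul_pow _ _ _).symm
    _ ≤ 256 ^ L := by gcongr
    _ = 2 ^ (8 * L) := by rw [pow_mul]; norm_num

theorem three_mul_two_zpow_mul_exp_le {L : ℕ} (n : ℕ) (hL : 1 ≤ L) {t : ℝ} (ht : 0 ≤ t) :
    3 * (2:ℝ) ^ (-((n:ℤ) + 8 * L)) * exp (L * t) ≤ (2:ℝ) ^ (-(n:ℤ)) * exp (4 * L * (t - 1)) := by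
  have hsplit : (2:ℝ) ^ (-((n:ℤ) + 8 * L)) = (2:ℝ) ^ (-(n:ℤ)) / 2 ^ (8 * L) := by
    rw [neg_add, zpow_add₀ two_ne_zero, zpow_neg (2:ℝ) (8 * L : ℤ), div_eq_mul_inv]
    norm_cast
  have key : exp (L * t) * (3 * exp (4 * L)) ≤ exp (4 * L * t) * 2 ^ (8 * L) := by
    gcongr
    · nlinarith [(L.cast_nonneg : (0:ℝ) ≤ L)]
    · exact three_mul_exp_le_two_pow hL
  rw [hsplit, mul_sub, mul_one, exp_sub]
  field_simp
  ring_nf at key ⊢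
  linarith

theorem euler_method_error_bound_general
    (L M n p : ℕ) (hL : 1 ≤ L)
    (g : ℝ → ℝ → ℝ) (h : ℝ → ℝ)
    (hg_lip : ∀ t ∈ Icc (0:ℝ) 1, ∀ y₀ y₁ : ℝ,
      |g t y₀ - g t y₁| ≤ (L : ℝ) * |y₀ - y₁|)
    (hg_bd : ∀ t ∈ Icc (0:ℝ) 1, ∀ y : ℝ, |g t y| ≤ 2 ^ M)
    (hg_mod : ∀ t ∈ Icc (0:ℝ) 1, ∀ t' ∈ Icc (0:ℝ) 1, |t - t'| ≤ (2:ℝ) ^ (-(p:ℤ)) →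
      ∀ y : ℝ, |g t y - g t' y| ≤ (2:ℝ) ^ (-((n:ℤ) + 8 * L)))
    (hh0 : h 0 = 0)
    (hh : ∀ t ∈ Icc (0:ℝ) 1, HasDerivAt h (g t (h t)) t)
    (hp : n + 8 * L + M ≤ p)
    (a : ℕ → ℝ) (htil : ℝ → ℝ)
    (htil0 : htil 0 = 0)
    (ha : ∀ T : ℕ, T < 2 ^ p →
      |a T - g ((T : ℝ) / 2 ^ p) (htil ((T : ℝ) / 2 ^ p))| ≤ (2:ℝ) ^ (-((n:ℤ) + 8 * L)))
    (hstep : ∀ T : ℕ, T < 2 ^ p → ∀ Δ ∈ Icc (0:ℝ) ((2:ℝ) ^ (-(p:ℤ))),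
      htil ((T : ℝ) / 2 ^ p + Δ) = htil ((T : ℝ) / 2 ^ p) + Δ * a T) :
    ∀ t ∈ Icc (0:ℝ) 1,
      |htil t - h t| ≤ (2:ℝ) ^ (-(n:ℤ)) * Real.exp (4 * (L : ℝ) * (t - 1)) ∧
      |htil t - h t| ≤ (2:ℝ) ^ (-(n:ℤ)) := by
  set ε : ℝ := (2:ℝ) ^ (-((n:ℤ) + 8 * L))
  have hδ : (2:ℝ) ^ (-(p:ℤ)) = ((2:ℝ) ^ p)⁻¹ := by rw [zpow_neg, zpow_natCast]
  have herr := abs_euler_polygon_sub_le_gronwallBound (N := 2 ^ p) (by positivity)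
    L.cast_nonneg hg_lip hg_bd (by simpa only [Nat.cast_pow, Nat.cast_ofNat, hδ] using hg_mod) hh
    (htil0.trans hh0.symm) (by simpa only [Nat.cast_pow, Nat.cast_ofNat] using ha)
    (by simpa only [Nat.cast_pow, Nat.cast_ofNat, hδ] using hstep)
  have hL' : (1:ℝ) ≤ L := by exact_mod_cast hL
  have hMp : (2:ℝ) ^ M / 2 ^ p ≤ ε := by
    rw [div_eq_mul_inv, ← hδ, ← zpow_natCast, ← zpow_add₀ two_ne_zero]
    exact zpow_le_zpow_right₀ one_le_two (by omega)
  have hc : 2 * ε + L * 2 ^ M / ((2 ^ p : ℕ) : ℝ) ≤ 3 * L * ε := by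
    push_cast
    rw [mul_div_assoc]
    nlinarith [mul_le_mul_of_nonneg_left hMp L.cast_nonneg, (by positivity : 0 ≤ ε)]
  intro t ht
  have hbound : |htil t - h t| ≤ (2:ℝ) ^ (-(n:ℤ)) * exp (4 * L * (t - 1)) := calc
    |htil t - h t| ≤ _ := herr t ht
    _ ≤ _ / L * exp (L * t) := gronwallBound_zero_le (by positivity) (by positivity) t
    _ ≤ 3 * L * ε / L * exp (L * t) := by gcongr
    _ = 3 * ε * exp (L * t) := by field_simp
    _ ≤ _ := three_mul_two_zpow_mul_exp_le n hL ht.1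
  refine ⟨hbound, hbound.trans (mul_le_of_le_one_right (by positivity) ?_)⟩
  exact exp_le_one_iff.2 (by nlinarith [ht.2])

/-- Error bound for the rounded forward Euler method: the Euler polygon with step
size `2^(-p)` and slope error at most `2^(-(n+8L))` approximates the true solution
of the IVP within `2^(-n) * exp (4L(t-1))` on `[0,1]`. -/
theorem euler_method_error_bound
    (L M n p : ℕ) (hL : 1 ≤ L)
    (g : ℝ → ℝ → ℝ) (h : ℝ → ℝ)
    (hg_cont : Continuous fun q : ℝ × ℝ => g q.1 q.2)
    (hg_lip : ∀ t ∈ Icc (0:ℝ) 1, ∀ y₀ y₁ : ℝ,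
      |g t y₀ - g t y₁| ≤ (L : ℝ) * |y₀ - y₁|)
    (hg_bd : ∀ t ∈ Icc (0:ℝ) 1, ∀ y : ℝ, |g t y| ≤ 2 ^ M)
    (hg_mod : ∀ t ∈ Icc (0:ℝ) 1, ∀ t' ∈ Icc (0:ℝ) 1, |t - t'| ≤ (2:ℝ) ^ (-(p:ℤ)) →
      ∀ y : ℝ, |g t y - g t' y| ≤ (2:ℝ) ^ (-((n:ℤ) + 8 * L)))
    (hh0 : h 0 = 0)
    (hh : ∀ t ∈ Icc (0:ℝ) 1, HasDerivAt h (g t (h t)) t)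
    (hp : n + 8 * L + M ≤ p)
    (a : ℕ → ℝ) (htil : ℝ → ℝ)
    (htil0 : htil 0 = 0)
    (ha : ∀ T : ℕ, T < 2 ^ p →
      |a T - g ((T : ℝ) / 2 ^ p) (htil ((T : ℝ) / 2 ^ p))| ≤ (2:ℝ) ^ (-((n:ℤ) + 8 * L)))
    (hstep : ∀ T : ℕ, T < 2 ^ p → ∀ Δ ∈ Icc (0:ℝ) ((2:ℝ) ^ (-(p:ℤ))),
      htil ((T : ℝ) / 2 ^ p + Δ) = htil ((T : ℝ) / 2 ^ p) + Δ * a T) :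
    ∀ t ∈ Icc (0:ℝ) 1,
      |htil t - h t| ≤ (2:ℝ) ^ (-(n:ℤ)) * Real.exp (4 * (L : ℝ) * (t - 1)) ∧
      |htil t - h t| ≤ (2:ℝ) ^ (-(n:ℤ)) :=
  euler_method_error_bound_general L M n p hL g h hg_lip hg_bd hg_mod hh0 hh hp a htil htil0 ha
    hstep
end

section
/- Pointwise slope-error estimate for the rounded Euler method: Assume p ≥ n + 8L + M. Let T be a natural number with T < 2^p, and let v, w ∈ ℝ satisfy |v − h(T/2^p)| ≤ 2^(−n)·exp(4L(T/2^p − 1)) and |w − g(T/2^p, v)| ≤ 2^(−(n+8L)). Then for every τ ∈ [T/2^p, (T+1)/2^p], one has |w − g(τ, h(τ))| ≤ 4L·2^(−n)·exp(4L(T/2^p − 1)). -/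
open Real Set

/-! The Euler slope `w` approximates `g(t₀, v)` at the grid point `t₀ = T/2^p`. Passing from
`(t₀, v)` to `(τ, h τ)` costs the Lipschitz constant times `|v - h τ|` in the state variable and
the time modulus `2^(-(n+8L))` in the time variable, and `|v - h τ|` is at most the error at `t₀`
plus the drift `2^M · 2^(-p) ≤ 2^(-(n+8L))` of `h` over one grid step. Since `e^4 ≤ 2^8`, the
time modulus is itself at most `2^(-n) e^{4L(t₀-1)}`, so all contributions add up to at most
`(2L + 2) · 2^(-n) e^{4L(t₀-1)} ≤ 4L · 2^(-n) e^{4L(t₀-1)}`. -/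

theorem Real.exp_natCast_le_four_pow (k : ℕ) : exp k ≤ 4 ^ k := by
  rw [← exp_one_pow]
  exact pow_le_pow_left₀ (exp_pos 1).le (exp_one_lt_d9.le.trans (by norm_num)) k

theorem two_zpow_neg_add_le_mul_exp (n L : ℕ) {t : ℝ} (ht : 0 ≤ t) :
    (2 : ℝ) ^ (-((n : ℤ) + 8 * L)) ≤ 2 ^ (-(n : ℤ)) * exp (4 * L * (t - 1)) := by
  have hsplit : (2 : ℝ) ^ (-((n : ℤ) + 8 * L)) = 2 ^ (-(n : ℤ)) * ((4 : ℝ) ^ (4 * L))⁻¹ := by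
    rw [neg_add, zpow_add₀ two_ne_zero, show (4 : ℝ) = 2 ^ 2 by norm_num, ← pow_mul,
      ← zpow_natCast, ← zpow_neg]
    push_cast
    ring_nf
  have hexp : ((4 : ℝ) ^ (4 * L))⁻¹ ≤ exp (4 * L * (t - 1)) :=
    calc ((4 : ℝ) ^ (4 * L))⁻¹ ≤ (exp (4 * L : ℕ))⁻¹ :=
          inv_anti₀ (exp_pos _) (exp_natCast_le_four_pow _)
      _ = exp (-(4 * L)) := by push_cast; rw [exp_neg]
      _ ≤ exp (4 * L * (t - 1)) := exp_le_exp.2 (by nlinarith [(L.cast_nonneg : (0 : ℝ) ≤ L)])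
  rw [hsplit]
  gcongr

theorem pow_mul_zpow_neg_le {a : ℝ} (ha : 1 ≤ a) {M : ℕ} {k p : ℤ} (h : k + M ≤ p) :
    a ^ M * a ^ (-p) ≤ a ^ (-k) := by
  rw [← zpow_natCast, ← zpow_add₀ (by positivity)]
  exact zpow_le_zpow_right₀ ha (by omega)

theorem Icc_div_two_pow_subset_Icc_zero_one {T p : ℕ} (hT : T < 2 ^ p) :
    Icc ((T : ℝ) / 2 ^ p) ((T + 1) / 2 ^ p) ⊆ Icc 0 1 :=
  Icc_subset_Icc (by positivity) (div_le_one_of_le₀ (by exact_mod_cast hT) (by positivity))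

theorem abs_sub_le_two_zpow_neg_of_mem_Icc {a x y : ℝ} {p : ℕ}
    (hx : x ∈ Icc (a / 2 ^ p) ((a + 1) / 2 ^ p)) (hy : y ∈ Icc (a / 2 ^ p) ((a + 1) / 2 ^ p)) :
    |x - y| ≤ 2 ^ (-(p : ℤ)) := by
  refine (abs_sub_le_of_le_of_le hx.1 hx.2 hy.1 hy.2).trans_eq ?_
  rw [zpow_neg, zpow_natCast]
  ring

theorem euler_method_slope_error_general
    (L M n p : ℕ) (hL : 1 ≤ L)
    (g : ℝ → ℝ → ℝ) (h : ℝ → ℝ)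
    (hg_lip : ∀ t ∈ Icc (0:ℝ) 1, ∀ y₀ y₁ : ℝ,
      |g t y₀ - g t y₁| ≤ (L : ℝ) * |y₀ - y₁|)
    (hg_bd : ∀ t ∈ Icc (0:ℝ) 1, ∀ y : ℝ, |g t y| ≤ 2 ^ M)
    (hg_mod : ∀ t ∈ Icc (0:ℝ) 1, ∀ t' ∈ Icc (0:ℝ) 1, |t - t'| ≤ (2:ℝ) ^ (-(p:ℤ)) →
      ∀ y : ℝ, |g t y - g t' y| ≤ (2:ℝ) ^ (-((n:ℤ) + 8 * L)))
    (hh : ∀ t ∈ Icc (0:ℝ) 1, HasDerivAt h (g t (h t)) t)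
    (hp : n + 8 * L + M ≤ p)
    (T : ℕ) (hT : T < 2 ^ p) (v w : ℝ)
    (hv : |v - h ((T : ℝ) / 2 ^ p)| ≤
      (2:ℝ) ^ (-(n:ℤ)) * Real.exp (4 * (L : ℝ) * ((T : ℝ) / 2 ^ p - 1)))
    (hw : |w - g ((T : ℝ) / 2 ^ p) v| ≤ (2:ℝ) ^ (-((n:ℤ) + 8 * L))) :
    ∀ τ ∈ Icc ((T : ℝ) / 2 ^ p) (((T : ℝ) + 1) / 2 ^ p),
      |w - g τ (h τ)| ≤
        4 * (L : ℝ) * (2:ℝ) ^ (-(n:ℤ)) * Real.exp (4 * (L : ℝ) * ((T : ℝ) / 2 ^ p - 1)) := by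
  intro τ hτ
  set t₀ : ℝ := (T : ℝ) / 2 ^ p
  set δ : ℝ := (2 : ℝ) ^ (-(n : ℤ)) * exp (4 * L * (t₀ - 1))
  set ε : ℝ := (2 : ℝ) ^ (-((n : ℤ) + 8 * L))
  have ht₀ : t₀ ∈ Icc t₀ ((T + 1) / 2 ^ p) := left_mem_Icc.2 (hτ.1.trans hτ.2)
  have hgap : |t₀ - τ| ≤ 2 ^ (-(p : ℤ)) := abs_sub_le_two_zpow_neg_of_mem_Icc ht₀ hτ
  have hdyadic := Icc_div_two_pow_subset_Icc_zero_one hT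
  have hdrift : |h t₀ - h τ| ≤ ε :=
    calc |h t₀ - h τ| ≤ 2 ^ M * |t₀ - τ| :=
          (convex_Icc 0 1).norm_image_sub_le_of_norm_hasDerivWithin_le
            (fun x hx ↦ (hh x hx).hasDerivWithinAt) (fun x hx ↦ hg_bd x hx (h x))
            (hdyadic hτ) (hdyadic ht₀)
      _ ≤ 2 ^ M * 2 ^ (-(p : ℤ)) := by gcongr
      _ ≤ ε := pow_mul_zpow_neg_le one_le_two (by exact_mod_cast hp)
  have hεδ : ε ≤ δ := two_zpow_neg_add_le_mul_exp n L (by positivity)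
  have hL' : (1 : ℝ) ≤ L := by exact_mod_cast hL
  calc |w - g τ (h τ)|
      ≤ |w - g t₀ v| + |g t₀ v - g t₀ (h τ)| + |g t₀ (h τ) - g τ (h τ)| :=
        (abs_sub_le _ (g t₀ (h τ)) _).trans (by gcongr; exact abs_sub_le _ _ _)
    _ ≤ ε + L * (δ + ε) + ε := by
        gcongr
        · exact (hg_lip t₀ (hdyadic ht₀) _ _).trans
            (by gcongr; exact (abs_sub_le _ (h t₀) _).trans (add_le_add hv hdrift))
        · exact hg_mod t₀ (hdyadic ht₀) τ (hdyadic hτ) hgap _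
    _ ≤ 4 * L * δ := by
        nlinarith [mul_le_mul_of_nonneg_left hεδ (by positivity : (0 : ℝ) ≤ L),
          mul_le_mul_of_nonneg_right hL' (by positivity : 0 ≤ δ)]
    _ = _ := (mul_assoc _ _ _).symm

/-- Pointwise slope-error estimate for the rounded Euler method. -/
theorem euler_method_slope_error
    (L M n p : ℕ) (hL : 1 ≤ L)
    (g : ℝ → ℝ → ℝ) (h : ℝ → ℝ)
    (hg_cont : Continuous fun q : ℝ × ℝ => g q.1 q.2)
    (hg_lip : ∀ t ∈ Icc (0:ℝ) 1, ∀ y₀ y₁ : ℝ,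
      |g t y₀ - g t y₁| ≤ (L : ℝ) * |y₀ - y₁|)
    (hg_bd : ∀ t ∈ Icc (0:ℝ) 1, ∀ y : ℝ, |g t y| ≤ 2 ^ M)
    (hg_mod : ∀ t ∈ Icc (0:ℝ) 1, ∀ t' ∈ Icc (0:ℝ) 1, |t - t'| ≤ (2:ℝ) ^ (-(p:ℤ)) →
      ∀ y : ℝ, |g t y - g t' y| ≤ (2:ℝ) ^ (-((n:ℤ) + 8 * L)))
    (hh0 : h 0 = 0)
    (hh : ∀ t ∈ Icc (0:ℝ) 1, HasDerivAt h (g t (h t)) t)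
    (hp : n + 8 * L + M ≤ p)
    (T : ℕ) (hT : T < 2 ^ p) (v w : ℝ)
    (hv : |v - h ((T : ℝ) / 2 ^ p)| ≤
      (2:ℝ) ^ (-(n:ℤ)) * Real.exp (4 * (L : ℝ) * ((T : ℝ) / 2 ^ p - 1)))
    (hw : |w - g ((T : ℝ) / 2 ^ p) v| ≤ (2:ℝ) ^ (-((n:ℤ) + 8 * L))) :
    ∀ τ ∈ Icc ((T : ℝ) / 2 ^ p) (((T : ℝ) + 1) / 2 ^ p),
      |w - g τ (h τ)| ≤
        4 * (L : ℝ) * (2:ℝ) ^ (-(n:ℤ)) * Real.exp (4 * (L : ℝ) * ((T : ℝ) / 2 ^ p - 1)) :=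
  euler_method_slope_error_general L M n p hL g h hg_lip hg_bd hg_mod hh hp T hT v w hv hw
end

section
/- Surjectivity of the signed digit representation ρ_sd of ℝ: For every x ∈ ℝ there exist k ∈ ℕ and a sequence a : ℤ → ℤ with a_i ∈ {−1, 0, 1} for all i ≤ k and a_i = 0 for all i > k, such that the series Σ_{j=0}^∞ a_{k−j}·2^(k−j) converges to x, and moreover either k = 0 or the pair (a_k, a_{k−1}) is one of (1,0), (1,1), (−1,0), (−1,−1). -/
/-!
A real `x ≥ 1` lies in `[2^k, 2^(k+1))` for some `k ∈ ℕ`, so `x = 2^k (1 + y)` with `y ∈ [0, 1)`;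
the digit `1` at position `k` followed by the binary expansion of `y` is then a name of `x` whose
leading pair is `(1, 0)` or `(1, 1)`. A real in `[0, 1)` is named with `k = 0` and `a₀ = 0`, and
negating every digit turns a name of `x` into a name of `-x`.
-/

open Real

def IsSignedDigitName (x : ℝ) (k : ℕ) (a : ℤ → ℤ) : Prop :=
  (∀ i : ℤ, i ≤ (k : ℤ) → a i ∈ ({-1, 0, 1} : Set ℤ)) ∧
    (∀ i : ℤ, (k : ℤ) < i → a i = 0) ∧
    HasSum (fun j : ℕ => (a ((k : ℤ) - j) : ℝ) * (2:ℝ) ^ ((k : ℤ) - j)) x ∧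
    (k = 0 ∨ (a k, a ((k : ℤ) - 1)) ∈ ({(1, 0), (1, 1), (-1, 0), (-1, -1)} : Set (ℤ × ℤ)))

theorem IsSignedDigitName.neg {x : ℝ} {k : ℕ} {a : ℤ → ℤ} (h : IsSignedDigitName x k a) :
    IsSignedDigitName (-x) k (-a) := by
  obtain ⟨hdigit, hzero, hsum, hlead⟩ := h
  refine ⟨fun i hi => ?_, fun i hi => by simp [hzero i hi], ?_, ?_⟩
  · rcases hdigit i hi with h | h | h <;> simp_all
  · simpa [neg_mul] using hsum.neg
  · rcases hlead with h | h
    · exact .inl h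
    · right; rcases h with h | h | h | h <;> simp_all

-- `digits y 2 n` has weight `2 ^ -(n + 1)`, so it is placed at position `k - 1 - n`.
noncomputable def binaryName (k : ℕ) (c : ℤ) (y : ℝ) (i : ℤ) : ℤ :=
  if i = k then c else if i < k then (digits y 2 (k - 1 - i).toNat : ℕ) else 0

theorem hasSum_binaryName (k : ℕ) (c : ℤ) {y : ℝ} (hy : y ∈ Set.Ico 0 1) :
    HasSum (fun j : ℕ => (binaryName k c y (k - j) : ℝ) * (2:ℝ) ^ ((k : ℤ) - j))
      (2 ^ k * (c + y)) := by
  have hterm (j : ℕ) :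
      (binaryName k c y (k - (j + 1 : ℕ)) : ℝ) * (2:ℝ) ^ ((k : ℤ) - (j + 1 : ℕ)) =
        2 ^ k * ofDigitsTerm (digits y 2) j := by
    have hlt : (k : ℤ) - (j + 1 : ℕ) < k := by omega
    have hidx : ((k : ℤ) - 1 - ((k : ℤ) - (j + 1 : ℕ))).toNat = j := by omega
    rw [binaryName, if_neg hlt.ne, if_pos hlt, hidx, zpow_sub₀ two_ne_zero, ofDigitsTerm]
    simp only [zpow_natCast, Int.cast_natCast, Nat.cast_ofNat]
    rw [div_eq_mul_inv, mul_left_comm]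
  have htail := (hasSum_ofDigitsTerm_digits y (b := 2) one_lt_two hy).mul_left ((2 : ℝ) ^ k)
  rw [← funext hterm] at htail
  convert HasSum.zero_add (f := fun j : ℕ => (binaryName k c y (k - j) : ℝ) * (2:ℝ) ^ ((k : ℤ) - j))
    htail using 1
  simp only [binaryName, CharP.cast_eq_zero, sub_zero, ↓reduceIte, zpow_natCast]
  ring

theorem isSignedDigitName_binaryName {k : ℕ} {c : ℤ} {y : ℝ} (hy : y ∈ Set.Ico 0 1)
    (hc : c ∈ ({0, 1} : Set ℤ)) (hck : k = 0 ∨ c = 1) :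
    IsSignedDigitName (2 ^ k * (c + y)) k (binaryName k c y) := by
  have hbit (n : ℕ) : ((digits y 2 n : ℕ) : ℤ) = 0 ∨ ((digits y 2 n : ℕ) : ℤ) = 1 := by
    have := (digits y 2 n).isLt
    omega
  refine ⟨fun i hi => ?_, fun i hi => ?_, hasSum_binaryName k c hy, ?_⟩
  · unfold binaryName
    split_ifs
    · rcases hc with h | h <;> simp [h]
    · rcases hbit ((k : ℤ) - 1 - i).toNat with h | h <;> simp [h]
    · simp
  · simp [binaryName, hi.ne', hi.not_gt]
  · refine hck.imp_right fun hc1 => ?_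
    have hsecond : binaryName k c y (k - 1) = (digits y 2 0 : ℕ) := by simp [binaryName]
    rw [hsecond]
    rcases hbit 0 with h | h <;> simp [binaryName, hc1, h]

theorem exists_isSignedDigitName_of_nonneg {x : ℝ} (hx : 0 ≤ x) :
    ∃ k a, IsSignedDigitName x k a := by
  rcases lt_or_ge x 1 with hx1 | hx1
  · exact ⟨0, _, by simpa using isSignedDigitName_binaryName (c := 0) ⟨hx, hx1⟩ (by simp) (.inl rfl)⟩
  · obtain ⟨k, hk, hk'⟩ := exists_nat_pow_near hx1 one_lt_two
    have hpos : (0 : ℝ) < 2 ^ k := by positivity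
    have hy : x / 2 ^ k - 1 ∈ Set.Ico (0 : ℝ) 1 := by
      constructor
      · rw [sub_nonneg, le_div_iff₀ hpos]; linarith
      · rw [sub_lt_iff_lt_add, div_lt_iff₀ hpos]; linarith [pow_succ (2 : ℝ) k]
    refine ⟨k, binaryName k 1 (x / 2 ^ k - 1), ?_⟩
    convert isSignedDigitName_binaryName hy (by simp) (.inr rfl) using 1
    field_simp
    ring

/-- Surjectivity of the signed digit representation of `ℝ`: every real number
has a valid signed-digit name. -/
theorem signed_digit_representation_surjective (x : ℝ) :
    ∃ (k : ℕ) (a : ℤ → ℤ),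
      (∀ i : ℤ, i ≤ (k : ℤ) → a i ∈ ({-1, 0, 1} : Set ℤ)) ∧
      (∀ i : ℤ, (k : ℤ) < i → a i = 0) ∧
      HasSum (fun j : ℕ => (a ((k : ℤ) - j) : ℝ) * (2:ℝ) ^ ((k : ℤ) - j)) x ∧
      (k = 0 ∨ (a k, a ((k : ℤ) - 1)) ∈
        ({(1, 0), (1, 1), (-1, 0), (-1, -1)} : Set (ℤ × ℤ))) := by
  rcases le_total 0 x with hx | hx
  · exact exists_isSignedDigitName_of_nonneg hx
  · obtain ⟨k, a, h⟩ := exists_isSignedDigitName_of_nonneg (neg_nonneg.mpr hx)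
    have hneg := h.neg
    rw [neg_neg] at hneg
    exact ⟨k, -a, hneg⟩
end

section
/- Symmetry of the solution of an initial value problem with antisymmetric right-hand side: Let a ≤ b be real numbers and let g : ℝ → ℝ → ℝ be continuous, Lipschitz in its second argument (there is K ≥ 0 with |g(t,y₀) − g(t,y₁)| ≤ K·|y₀ − y₁| for all t ∈ [a,b] and y₀, y₁ ∈ ℝ), and antisymmetric about the midpoint of [a,b] in its first argument: g(a + b − t, y) = −g(t, y) for all t ∈ [a,b] and y ∈ ℝ. If h : ℝ → ℝ satisfies, for every t ∈ [a,b], that h has derivative g(t, h(t)) at t, then h(a + b − t) = h(t) for all t ∈ [a,b]; in particular h(b) = h(a). -/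
open Set

/-!
The reflection `t ↦ h (a + b - t)` of a solution of `h' = g(t, h)` is again a solution, because
reflecting time negates the derivative and the antisymmetry of `g` negates it back. Both
functions agree at the midpoint of `[a, b]`, which the reflection fixes, so by uniqueness of
solutions of Lipschitz initial value problems they agree on `[a, b]`.
-/

variable {E : Type*} [NormedAddCommGroup E] [NormedSpace ℝ E]

theorem HasDerivAt.comp_const_sub_of_antisymm {g : ℝ → E → E} {h : ℝ → E} {c t : ℝ}
    (hh : HasDerivAt h (g (c - t) (h (c - t))) (c - t)) (hanti : ∀ y, g (c - t) y = -g t y) :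
    HasDerivAt (fun s => h (c - s)) (g t (h (c - t))) t := by
  simpa [hanti] using hh.comp_const_sub c t

theorem eqOn_comp_const_sub_of_antisymm {g : ℝ → E → E} {K : NNReal} {a b : ℝ} {h : ℝ → E}
    (hlip : ∀ t ∈ Icc a b, LipschitzWith K (g t))
    (hanti : ∀ t ∈ Icc a b, ∀ y, g (a + b - t) y = -g t y)
    (hh : ∀ t ∈ Icc a b, HasDerivAt h (g t (h t)) t) :
    EqOn (fun t => h (a + b - t)) h (Icc a b) := by
  have hmirror : ∀ t ∈ Icc a b, a + b - t ∈ Icc a b := fun t ht =>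
    ⟨by linarith [ht.2], by linarith [ht.1]⟩
  have hupper : Icc ((a + b) / 2) b ⊆ Icc a b := fun t ht =>
    ⟨by linarith [ht.1, ht.2], ht.2⟩
  have hreflect : ∀ t ∈ Icc a b, HasDerivAt (fun s => h (a + b - s)) (g t (h (a + b - t))) t :=
    fun t ht => (hh _ (hmirror t ht)).comp_const_sub_of_antisymm (hanti t ht)
  have heq_upper : EqOn (fun t => h (a + b - t)) h (Icc ((a + b) / 2) b) := by
    have hupper' := Ico_subset_Icc_self.trans hupper
    exact ODE_solution_unique_of_mem_Icc_right (s := fun _ => univ)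
      (fun t ht => (hlip t (hupper' ht)).lipschitzOnWith)
      (HasDerivAt.continuousOn fun t ht => hreflect t (hupper ht))
      (fun t ht => (hreflect t (hupper' ht)).hasDerivWithinAt) (fun _ _ => trivial)
      (HasDerivAt.continuousOn fun t ht => hh t (hupper ht))
      (fun t ht => (hh t (hupper' ht)).hasDerivWithinAt) (fun _ _ => trivial)
      (congrArg h (by ring))
  intro t ht
  rcases le_total ((a + b) / 2) t with hmt | htm
  · exact heq_upper ⟨hmt, ht.2⟩
  · have := heq_upper (x := a + b - t) ⟨by linarith, by linarith [ht.1]⟩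
    simp only [sub_sub_cancel] at this
    exact this.symm

theorem ivp_solution_symmetric_general
    (a b : ℝ) (hab : a ≤ b) (g : ℝ → ℝ → ℝ) (K : ℝ)
    (hg_lip : ∀ t ∈ Icc a b, ∀ y₀ y₁ : ℝ, |g t y₀ - g t y₁| ≤ K * |y₀ - y₁|)
    (hg_anti : ∀ t ∈ Icc a b, ∀ y : ℝ, g (a + b - t) y = -g t y)
    (h : ℝ → ℝ) (hh : ∀ t ∈ Icc a b, HasDerivAt h (g t (h t)) t) :
    (∀ t ∈ Icc a b, h (a + b - t) = h t) ∧ h b = h a := by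
  have hlip : ∀ t ∈ Icc a b, LipschitzWith K.toNNReal (g t) := fun t ht =>
    LipschitzWith.of_dist_le' fun y₀ y₁ => by simpa only [Real.dist_eq] using hg_lip t ht y₀ y₁
  have hsymm := eqOn_comp_const_sub_of_antisymm hlip hg_anti hh
  exact ⟨hsymm, by simpa using (hsymm ⟨hab, le_rfl⟩).symm⟩

/-- Symmetry of the solution of an initial value problem whose right-hand side is
antisymmetric about the midpoint of `[a,b]` in its first argument: the solution
takes the same value at `t` and at its mirror point `a + b - t`; in particular
`h b = h a`. -/
theorem ivp_solution_symmetric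
    (a b : ℝ) (hab : a ≤ b) (g : ℝ → ℝ → ℝ) (K : ℝ) (hK : 0 ≤ K)
    (hg_cont : Continuous fun q : ℝ × ℝ => g q.1 q.2)
    (hg_lip : ∀ t ∈ Icc a b, ∀ y₀ y₁ : ℝ, |g t y₀ - g t y₁| ≤ K * |y₀ - y₁|)
    (hg_anti : ∀ t ∈ Icc a b, ∀ y : ℝ, g (a + b - t) y = -g t y)
    (h : ℝ → ℝ) (hh : ∀ t ∈ Icc a b, HasDerivAt h (g t (h t)) t) :
    (∀ t ∈ Icc a b, h (a + b - t) = h t) ∧ h b = h a :=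
  ivp_solution_symmetric_general a b hab g K hg_lip hg_anti h hh
end

section
/- Correctness of the approximation scheme for multiplication of real numbers: Let k, m ∈ ℕ with k ≥ 1, and let s, t, a, b ∈ ℝ satisfy |s| ≤ 2^(k−1), |t| ≤ 2^(k−1), |a − s| ≤ 2^(−(m+k+1)) and |b − t| ≤ 2^(−(m+k+1)). Then |a·b − s·t| < 2^(−m). -/
/-!
With `M = 2^(k-1)` and `ε = 2^(-(m+k+1))`, the identity
`ab - st = (a - s)(b - t) + (a - s)t + s(b - t)` bounds the error by `ε² + 2Mε`.
Here `Mε = 2^(-m-2)` exactly, and `ε² < 2^(-m-2)` because `k ≥ 1`, so the error is below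
`3 · 2^(-m-2) < 2^(-m)`.
-/

section SeminormedRing

variable {R : Type*} [SeminormedRing R]

theorem norm_mul_sub_mul_le (a b s t : R) :
    ‖a * b - s * t‖ ≤ ‖a - s‖ * ‖b - t‖ + ‖a - s‖ * ‖t‖ + ‖s‖ * ‖b - t‖ := by
  have expand : a * b - s * t = (a - s) * (b - t) + (a - s) * t + s * (b - t) := by noncomm_ring
  rw [expand]
  refine (norm_add₃_le ..).trans ?_
  gcongr <;> exact norm_mul_le _ _

theorem norm_mul_sub_mul_le_of_le {a b s t : R} {M ε : ℝ} (hs : ‖s‖ ≤ M) (ht : ‖t‖ ≤ M)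
    (ha : ‖a - s‖ ≤ ε) (hb : ‖b - t‖ ≤ ε) :
    ‖a * b - s * t‖ ≤ ε * ε + 2 * (M * ε) := by
  have hε : 0 ≤ ε := (norm_nonneg _).trans ha
  calc ‖a * b - s * t‖ ≤ ‖a - s‖ * ‖b - t‖ + ‖a - s‖ * ‖t‖ + ‖s‖ * ‖b - t‖ :=
        norm_mul_sub_mul_le a b s t
    _ ≤ ε * ε + ε * M + M * ε := by gcongr; exact (norm_nonneg _).trans hs
    _ = ε * ε + 2 * (M * ε) := by ring

end SeminormedRing

/-- Correctness of the approximation scheme for multiplication of real numbers: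
approximating both factors with precision `2^(-(m+k+1))`, where `2^(k-1)` bounds
their magnitudes, approximates the product with precision `2^(-m)`. -/
theorem multiplication_approximation_correct
    (k m : ℕ) (hk : 1 ≤ k) (s t a b : ℝ)
    (hs : |s| ≤ 2 ^ (k - 1)) (ht : |t| ≤ 2 ^ (k - 1))
    (ha : |a - s| ≤ (2:ℝ) ^ (-((m:ℤ) + k + 1)))
    (hb : |b - t| ≤ (2:ℝ) ^ (-((m:ℤ) + k + 1))) :
    |a * b - s * t| < (2:ℝ) ^ (-(m:ℤ)) := by
  simp only [← Real.norm_eq_abs] at hs ht ha hb ⊢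
  set ε : ℝ := 2 ^ (-((m:ℤ) + k + 1))
  set δ : ℝ := 2 ^ (-(m:ℤ) - 2)
  have hM : (2:ℝ) ^ (k - 1) = 2 ^ ((k:ℤ) - 1) := by
    rw [← zpow_natCast, Nat.cast_sub hk, Nat.cast_one]
  have hMε : (2:ℝ) ^ (k - 1) * ε = δ := by
    rw [hM, ← zpow_add₀ two_ne_zero]; congr 1; ring
  have hεδ : ε ≤ δ := zpow_le_zpow_right₀ one_le_two (by omega)
  have hε_lt_one : ε < 1 := zpow_lt_one_of_neg₀ one_lt_two (by omega)
  have hδ : (2:ℝ) ^ (-(m:ℤ)) = 4 * δ := by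
    rw [show (4:ℝ) = 2 ^ (2:ℤ) by norm_num, ← zpow_add₀ two_ne_zero]; congr 1; ring
  have hεε : ε * ε < δ :=
    (mul_lt_of_lt_one_right (zpow_pos two_pos _) hε_lt_one).trans_le hεδ
  calc ‖a * b - s * t‖ ≤ ε * ε + 2 * ((2:ℝ) ^ (k - 1) * ε) :=
        norm_mul_sub_mul_le_of_le hs ht ha hb
    _ < 2 ^ (-(m:ℤ)) := by rw [hMε, hδ]; linarith [(by positivity : 0 < δ)]
end

section
/- Regularity of the pairing of regular functions: Let φ and ψ be regular functions on binary strings. Define ⟨φ, ψ⟩ by: ⟨φ, ψ⟩(0·u) = φ(u)·1·0^{|ψ(u)|} and ⟨φ, ψ⟩(1·u) = ψ(u)·1·0^{|φ(u)|} for every string u (where · denotes concatenation, b·u prepends the bit b to u, and 0^j is the string of j zeros), and ⟨φ, ψ⟩(ε) = φ(ε)·1·0^{|ψ(ε)|} on the empty string ε. Then ⟨φ, ψ⟩ is regular, and |⟨φ, ψ⟩(b·u)| = |φ(u)| + |ψ(u)| + 1 for every bit b and every string u. -/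
/-! Each branch of the pairing has length `|φ(u)| + |ψ(u)| + 1`, where `u` is the input with its
first bit dropped (and `u = ε` on the empty input); so the output length is a sum of lengths of
regular functions of the tail, and dropping the first bit preserves relative lengths. -/

/-- A total function on binary strings is regular (length-monotone) if it
preserves relative lengths of strings. -/
def Regular (φ : List Bool → List Bool) : Prop :=
  ∀ u v : List Bool, u.length ≤ v.length → (φ u).length ≤ (φ v).length

theorem Regular.comp_tail {φ : List Bool → List Bool} (hφ : Regular φ) :
    Regular (φ ∘ List.tail) := fun u v huv =>
  hφ u.tail v.tail (by simp only [List.length_tail]; omega)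

theorem Regular.of_length_eq_add {φ ψ χ : List Bool → List Bool} (hφ : Regular φ)
    (hψ : Regular ψ) (c : ℕ) (hχ : ∀ w, (χ w).length = (φ w).length + (ψ w).length + c) :
    Regular χ := fun u v huv => by
  rw [hχ u, hχ v]
  have := hφ u v huv
  have := hψ u v huv
  omega

theorem length_pairing {φ ψ χ : List Bool → List Bool}
    (hχ₀ : ∀ u, χ (false :: u) = φ u ++ true :: List.replicate (ψ u).length false)
    (hχ₁ : ∀ u, χ (true :: u) = ψ u ++ true :: List.replicate (φ u).length false)
    (hχε : χ [] = φ [] ++ true :: List.replicate (ψ []).length false) (w : List Bool) :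
    (χ w).length = (φ w.tail).length + (ψ w.tail).length + 1 := by
  match w with
  | [] => rw [hχε]; simp only [List.length_append, List.length_cons, List.length_replicate,
      List.tail_nil, Nat.add_assoc]
  | false :: u => rw [hχ₀ u]; simp only [List.length_append, List.length_cons,
      List.length_replicate, List.tail_cons, Nat.add_assoc]
  | true :: u => rw [hχ₁ u]; simp only [List.length_append, List.length_cons,
      List.length_replicate, List.tail_cons]; omega

/-- Regularity of the pairing of regular functions: if `φ` and `ψ` are regular
and `χ` is the pairing `⟨φ, ψ⟩` (with `χ(0·u) = φ(u)·1·0^{|ψ(u)|}`,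
`χ(1·u) = ψ(u)·1·0^{|φ(u)|}`, and `χ(ε) = φ(ε)·1·0^{|ψ(ε)|}`, where the bit `0`
is `false` and the bit `1` is `true`), then `χ` is regular and
`|χ(b·u)| = |φ(u)| + |ψ(u)| + 1` for every bit `b` and string `u`. -/
theorem pairing_of_regular_functions_regular
    (φ ψ χ : List Bool → List Bool)
    (hφ : Regular φ) (hψ : Regular ψ)
    (hχ₀ : ∀ u : List Bool,
      χ (false :: u) = φ u ++ true :: List.replicate (ψ u).length false)
    (hχ₁ : ∀ u : List Bool,
      χ (true :: u) = ψ u ++ true :: List.replicate (φ u).length false)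
    (hχε : χ [] = φ [] ++ true :: List.replicate (ψ []).length false) :
    Regular χ ∧
    ∀ (b : Bool) (u : List Bool),
      (χ (b :: u)).length = (φ u).length + (ψ u).length + 1 := by
  have hlen := length_pairing hχ₀ hχ₁ hχε
  exact ⟨hφ.comp_tail.of_length_eq_add hψ.comp_tail 1 hlen, fun b u => hlen (b :: u)⟩
end
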